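/- Let S be a sparse collection in a filtered measure space and 𝖲f = Σ_{P∈S}⟨f⟩_P 1_P. Then 𝖲 satisfies the weak (1,1) bound: λ μ({𝖲f > λ}) ≤ C ‖f‖_{L^1(μ)} for all λ > 0 and nonnegative f ∈ L^1(μ), with an absolute constant C. -/

import Mathlib

/-!
It suffices to treat a finite subfamily `T ⊆ S` and a level `λ`. Sparseness yields the packing
estimate `∑_{P ∈ T} μ P ≤ 2 μ (⋃ T)`: the members of `S` strictly inside `P ∈ S` cover at most half
of `P`, and one inducts on `T` through its disjoint maximal elements. The sets with `⟨f⟩_P > λ/2`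
are covered by their disjoint maximal elements, of total measure at most `2 ‖f‖₁ / λ`. The other
sets are sorted into levels `⟨f⟩_P ∈ (β/8, β]`, `β = λ 8⁻ᵐ / 2`. On a level the operator is at most
`β N`, `N` the counting function of the level, and packing gives `‖N‖₂² ≤ 8 μ (⋃ level)`, which the
maximal elements of the level bound by `64 ‖f‖₁ / β`; Chebyshev at height `λ 2⁻⁽ᵐ⁺¹⁾` then costs
`2⁷ 2⁻ᵐ ‖f‖₁ / λ`, and these heights add up to `λ`.
-/

open MeasureTheory

/-- A filtered structure on a measure space: for each `n ∈ ℤ`, a countable partition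
`part n` of `Ω` into measurable sets of finite positive measure, with `part (n+1)`
refining `part n`. -/
structure MartingaleGrid (Ω : Type*) [MeasurableSpace Ω] (μ : Measure Ω) where
  part : ℤ → Set (Set Ω)
  countable : ∀ n, (part n).Countable
  measurableSet : ∀ n, ∀ Q ∈ part n, MeasurableSet Q
  pos : ∀ n, ∀ Q ∈ part n, 0 < μ Q
  fin : ∀ n, ∀ Q ∈ part n, μ Q < ⊤
  disjoint : ∀ n, (part n).PairwiseDisjoint id
  cover : ∀ n, ⋃₀ part n = Set.univ
  refines : ∀ n, ∀ Q ∈ part (n + 1), ∃ P ∈ part n, Q ⊆ P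

variable {Ω : Type*} [MeasurableSpace Ω] {μ : MeasureTheory.Measure Ω}

/-- The tree `𝒬 = ⋃ₙ 𝒬ₙ` of all partition sets. -/
def MartingaleGrid.tree (G : MartingaleGrid Ω μ) : Set (Set Ω) :=
  ⋃ n : ℤ, G.part n

/-- The children of `P`: the maximal elements of the tree strictly contained in `P`. -/
def MartingaleGrid.children (G : MartingaleGrid Ω μ) (P : Set Ω) : Set (Set Ω) :=
  {Q | Q ∈ G.tree ∧ Q ⊂ P ∧ ∀ R ∈ G.tree, Q ⊆ R → R ⊂ P → R = Q}

/-- The martingale difference `Δ_P f = Σ_{Q child of P} 1_Q (⟨f⟩_Q − ⟨f⟩_P)`. -/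
noncomputable def MartingaleGrid.mdiff (G : MartingaleGrid Ω μ) (P : Set Ω)
    (f : Ω → ℝ) (x : Ω) : ℝ :=
  ∑' Q : G.children P,
    Set.indicator (Q : Set Ω)
      (fun _ => (⨍ y in (Q : Set Ω), f y ∂μ) - ⨍ y in P, f y ∂μ) x

/-- The `S`-children of `P`: the maximal elements of `S` strictly contained in `P`. -/
def sparseChildren (S : Set (Set Ω)) (P : Set Ω) : Set (Set Ω) :=
  {Q | Q ∈ S ∧ Q ⊂ P ∧ ∀ R ∈ S, Q ⊆ R → R ⊂ P → R = Q}

/-- A collection `S` is sparse for `μ` if for each `P ∈ S` the `S`-children of `P`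
have total measure at most `μ(P)/2`. -/
def IsSparseIn (μ : Measure Ω) (S : Set (Set Ω)) : Prop :=
  ∀ P ∈ S, ∑' Q : sparseChildren S P, μ (Q : Set Ω) ≤ μ P / 2

open scoped ENNReal

lemma ENNReal.exists_mul_pow_lt_le {a B r : ℝ≥0∞} (ha : a ≠ 0) (hB : B ≠ ∞) (hr : r < 1)
    (haB : a ≤ B) : ∃ m : ℕ, B * r ^ (m + 1) < a ∧ a ≤ B * r ^ m := by
  classical
  have hex : ∃ n : ℕ, B * r ^ n < a := by
    have := ENNReal.Tendsto.const_mul (ENNReal.tendsto_pow_atTop_nhds_zero_of_lt_one hr)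
      (Or.inr hB)
    rw [mul_zero] at this
    exact (this.eventually (gt_mem_nhds (pos_iff_ne_zero.2 ha))).exists
  obtain ⟨m, hm⟩ := Nat.exists_eq_add_one_of_ne_zero (n := Nat.find hex) fun h => by
    have := Nat.find_spec hex
    rw [h, pow_zero, mul_one] at this
    exact this.not_ge haB
  exact ⟨m, hm ▸ Nat.find_spec hex, not_lt.1 (Nat.find_min hex (by omega))⟩

lemma sum_indicator_le_tsum_levels {α : Type*} (T : Finset (Set α)) (a : Set α → ℝ≥0∞)
    {B r : ℝ≥0∞} (hB : B ≠ ∞) (hr : r < 1) {x : α} (hx : ∀ P ∈ T, x ∈ P → a P ≤ B) :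
    ∑ P ∈ T, P.indicator (fun _ => a P) x ≤
      ∑' m : ℕ, ∑ P ∈ T with B * r ^ (m + 1) < a P ∧ a P ≤ B * r ^ m,
        P.indicator (fun _ => a P) x := by
  calc ∑ P ∈ T, P.indicator (fun _ => a P) x
      ≤ ∑ P ∈ T, ∑' m : ℕ, if B * r ^ (m + 1) < a P ∧ a P ≤ B * r ^ m then
          P.indicator (fun _ => a P) x else 0 := by
        refine Finset.sum_le_sum fun P hP => ?_
        by_cases hxP : x ∈ P
        · by_cases h0 : a P = 0
          · simp [h0]
          obtain ⟨m, hm⟩ := ENNReal.exists_mul_pow_lt_le h0 hB hr (hx P hP hxP)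
          exact (if_pos hm).symm.le.trans (ENNReal.le_tsum m)
        · simp [hxP]
    _ = _ := by
        rw [← Summable.tsum_finsetSum fun _ _ => ENNReal.summable]
        simp_rw [Finset.sum_filter]

lemma measure_lt_tsum_eq_iSup {ι : Type*} [Countable ι] (F : ι → Ω → ℝ≥0∞) (c : ℝ≥0∞) :
    μ {x | c < ∑' i, F i x} = ⨆ T : Finset ι, μ {x | c < ∑ i ∈ T, F i x} := by
  have : {x | c < ∑' i, F i x} = ⋃ T : Finset ι, {x | c < ∑ i ∈ T, F i x} := by
    ext x
    simp only [Set.mem_ofPred_eq, Set.mem_iUnion, ENNReal.tsum_eq_iSup_sum, lt_iSup_iff]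
  rw [this]
  exact Monotone.measure_iUnion fun T T' h x (hx : c < _) =>
    show c < _ from hx.trans_le (Finset.sum_le_sum_of_subset h)

lemma lintegral_sum_indicator_one_sq (T : Finset (Set Ω)) (hT : ∀ P ∈ T, MeasurableSet P) :
    ∫⁻ x, (∑ P ∈ T, P.indicator (1 : Ω → ℝ≥0∞) x) ^ 2 ∂μ = ∑ P ∈ T, ∑ Q ∈ T, μ (P ∩ Q) := by
  have hPQ : ∀ P ∈ T, ∀ Q ∈ T, MeasurableSet (P ∩ Q) := fun P hP Q hQ => (hT P hP).inter (hT Q hQ)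
  have hmul : ∀ (P Q : Set Ω) x,
      P.indicator (1 : Ω → ℝ≥0∞) x * Q.indicator 1 x = (P ∩ Q).indicator 1 x := fun P Q x => by
    rw [Set.inter_indicator_one, Pi.mul_apply]
  simp_rw [sq, Finset.sum_mul_sum, hmul]
  rw [lintegral_finsetSum _ fun P hP => Finset.measurable_sum _ fun Q hQ =>
    measurable_one.indicator (hPQ P hP Q hQ)]
  refine Finset.sum_congr rfl fun P hP => ?_
  rw [lintegral_finsetSum _ fun Q hQ => measurable_one.indicator (hPQ P hP Q hQ)]
  exact Finset.sum_congr rfl fun Q hQ => lintegral_indicator_one (hPQ P hP Q hQ)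

namespace MartingaleGrid

open scoped Classical

variable (G : MartingaleGrid Ω μ)

lemma countable_tree : G.tree.Countable := Set.countable_iUnion G.countable

lemma measurableSet_of_mem_tree {P : Set Ω} (hP : P ∈ G.tree) : MeasurableSet P := by
  obtain ⟨n, hn⟩ := Set.mem_iUnion.1 hP
  exact G.measurableSet n P hn

lemma measure_ne_top_of_mem_tree {P : Set Ω} (hP : P ∈ G.tree) : μ P ≠ ∞ := by
  obtain ⟨n, hn⟩ := Set.mem_iUnion.1 hP
  exact (G.fin n P hn).ne

lemma nonempty_of_mem_tree {P : Set Ω} (hP : P ∈ G.tree) : P.Nonempty := by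
  obtain ⟨n, hn⟩ := Set.mem_iUnion.1 hP
  exact nonempty_of_measure_ne_zero (G.pos n P hn).ne'

lemma exists_superset_mem_part {a b : ℤ} (hab : a ≤ b) {R : Set Ω} (hR : R ∈ G.part b) :
    ∃ P ∈ G.part a, R ⊆ P := by
  induction b, hab using Int.leInduction generalizing R with
  | base => exact ⟨R, hR, subset_rfl⟩
  | succ n _ ih =>
    obtain ⟨Q, hQ, hRQ⟩ := G.refines n R hR
    obtain ⟨P, hP, hQP⟩ := ih hQ
    exact ⟨P, hP, hRQ.trans hQP⟩

lemma subset_of_mem_part_of_le {P Q : Set Ω} {a b : ℤ} (hP : P ∈ G.part a)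
    (hQ : Q ∈ G.part b) (hab : a ≤ b) (h : ¬Disjoint P Q) : Q ⊆ P := by
  obtain ⟨P', hP', hQP'⟩ := G.exists_superset_mem_part hab hQ
  obtain rfl : P = P' := (G.disjoint a).elim hP hP' fun hd => h (hd.mono_right hQP')
  exact hQP'

lemma subset_or_subset_of_not_disjoint {P Q : Set Ω} (hP : P ∈ G.tree) (hQ : Q ∈ G.tree)
    (h : ¬Disjoint P Q) : P ⊆ Q ∨ Q ⊆ P := by
  obtain ⟨a, ha⟩ := Set.mem_iUnion.1 hP
  obtain ⟨b, hb⟩ := Set.mem_iUnion.1 hQ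
  rcases le_total a b with hab | hba
  · exact Or.inr (G.subset_of_mem_part_of_le ha hb hab h)
  · exact Or.inl (G.subset_of_mem_part_of_le hb ha hba fun hd => h hd.symm)

lemma lt_of_ssubset {P Q : Set Ω} {a b : ℤ} (hP : P ∈ G.part a) (hQ : Q ∈ G.part b)
    (h : P ⊂ Q) : b < a := by
  by_contra! hab
  have hPQ : ¬Disjoint P Q := fun hd =>
    (G.nonempty_of_mem_tree (Set.mem_iUnion.2 ⟨a, hP⟩)).ne_empty
      (disjoint_self.1 (hd.mono_right h.subset))
  exact h.not_subset (G.subset_of_mem_part_of_le hP hQ hab hPQ)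

lemma exists_mem_sparseChildren_superset {S : Set (Set Ω)} (hSG : S ⊆ G.tree) {P Q : Set Ω}
    (hP : P ∈ G.tree) (hQ : Q ∈ S) (hQP : Q ⊂ P) : ∃ R ∈ sparseChildren S P, Q ⊆ R := by
  obtain ⟨a, ha⟩ := Set.mem_iUnion.1 hP
  obtain ⟨b, hb⟩ := Set.mem_iUnion.1 (hSG hQ)
  -- an `R ∈ S` between `Q` and `P` of least level is `⊆`-maximal among them
  obtain ⟨n, ⟨R, ⟨hRS, hQR, hRP⟩, hRn⟩, hmin⟩ :=
    Int.exists_least_of_bdd (P := fun n => ∃ R, (R ∈ S ∧ Q ⊆ R ∧ R ⊂ P) ∧ R ∈ G.part n)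
      ⟨a, fun n ⟨R, hR, hRn⟩ => (G.lt_of_ssubset hRn ha hR.2.2).le⟩
      ⟨b, Q, ⟨hQ, subset_rfl, hQP⟩, hb⟩
  refine ⟨R, ⟨hRS, hRP, fun R' hR'S hRR' hR'P => ?_⟩, hQR⟩
  by_contra hne
  obtain ⟨n', hn'⟩ := Set.mem_iUnion.1 (hSG hR'S)
  have := hmin n' ⟨R', ⟨hR'S, hQR.trans hRR', hR'P⟩, hn'⟩
  have := G.lt_of_ssubset hRn hn' (hRR'.ssubset_of_ne (Ne.symm hne))
  omega

lemma exists_pairwiseDisjoint_maximals (T : Finset (Set Ω)) (hT : ↑T ⊆ G.tree) :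
    ∃ M ⊆ T, (M : Set (Set Ω)).PairwiseDisjoint id ∧ ∀ P ∈ T, ∃ t ∈ M, P ⊆ t := by
  refine ⟨T.filter fun t => ∀ Q ∈ T, t ⊆ Q → t = Q, Finset.filter_subset _ _, ?_, ?_⟩
  · intro A hA B hB hne
    simp only [Finset.coe_filter] at hA hB
    by_contra h
    rcases G.subset_or_subset_of_not_disjoint (hT hA.1) (hT hB.1) h with hAB | hBA
    exacts [hne (hA.2 B hB.1 hAB), hne (hB.2 A hA.1 hBA).symm]
  · intro P hP
    obtain ⟨t, ht, htmax⟩ := Finset.exists_maximal (s := T.filter (P ⊆ ·)) ⟨P, by simpa using hP⟩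
    obtain ⟨htT, hPt⟩ := Finset.mem_filter.1 ht
    refine ⟨t, Finset.mem_filter.2 ⟨htT, fun Q hQ htQ => ?_⟩, hPt⟩
    exact htQ.antisymm (htmax (Finset.mem_filter.2 ⟨hQ, hPt.trans htQ⟩) htQ)

theorem mul_measure_biUnion_le_lintegral (T : Finset (Set Ω)) (hT : ↑T ⊆ G.tree)
    (g : Ω → ℝ≥0∞) {γ : ℝ≥0∞} (hγ : ∀ P ∈ T, γ ≤ ⨍⁻ x in P, g x ∂μ) :
    γ * μ (⋃ P ∈ T, P) ≤ ∫⁻ x, g x ∂μ := by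
  obtain ⟨M, hMT, hMd, hcover⟩ := G.exists_pairwiseDisjoint_maximals T hT
  have hM : ∀ t ∈ M, MeasurableSet t := fun t ht => G.measurableSet_of_mem_tree (hT (hMT ht))
  calc γ * μ (⋃ P ∈ T, P) ≤ γ * μ (⋃ t ∈ M, t) := by
        gcongr γ * μ ?_
        refine Set.iUnion₂_subset fun P hP => ?_
        obtain ⟨t, ht, hPt⟩ := hcover P hP
        exact hPt.trans (Set.subset_biUnion_of_mem (u := id) ht)
    _ = ∑ t ∈ M, γ * μ t := by rw [measure_biUnion_finset (f := fun t => t) hMd hM, Finset.mul_sum]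
    _ ≤ ∑ t ∈ M, ∫⁻ x in t, g x ∂μ := by
        refine Finset.sum_le_sum fun t ht => ?_
        rw [← measure_mul_setLAverage g (G.measure_ne_top_of_mem_tree (hT (hMT ht))), mul_comm]
        gcongr
        exact hγ t (hMT ht)
    _ = ∫⁻ x in ⋃ t ∈ M, t, g x ∂μ := (lintegral_biUnion_finset hMd hM g).symm
    _ ≤ ∫⁻ x, g x ∂μ := setLIntegral_le_lintegral _ _

lemma sum_sum_measure_inter_le (T : Finset (Set Ω)) (hT : ↑T ⊆ G.tree) :
    ∑ P ∈ T, ∑ Q ∈ T, μ (P ∩ Q) ≤ 2 * ∑ P ∈ T, ∑ Q ∈ T with Q ⊆ P, μ Q := by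
  have hpair : ∀ P ∈ T, ∀ Q ∈ T,
      μ (P ∩ Q) ≤ (if Q ⊆ P then μ Q else 0) + (if P ⊆ Q then μ P else 0) := by
    intro P hP Q hQ
    by_cases hd : Disjoint P Q
    · simp [Set.disjoint_iff_inter_eq_empty.1 hd]
    rcases G.subset_or_subset_of_not_disjoint (hT hP) (hT hQ) hd with h | h
    · rw [Set.inter_eq_left.2 h, if_pos h]
      exact le_add_self
    · rw [Set.inter_eq_right.2 h, if_pos h]
      exact le_self_add
  calc ∑ P ∈ T, ∑ Q ∈ T, μ (P ∩ Q)
      ≤ ∑ P ∈ T, ∑ Q ∈ T, ((if Q ⊆ P then μ Q else 0) + (if P ⊆ Q then μ P else 0)) :=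
        Finset.sum_le_sum fun P hP => Finset.sum_le_sum fun Q hQ => hpair P hP Q hQ
    _ = 2 * ∑ P ∈ T, ∑ Q ∈ T with Q ⊆ P, μ Q := by
        simp_rw [Finset.sum_add_distrib, Finset.sum_filter]
        rw [two_mul, Finset.sum_comm (s := T) (t := T) (f := fun P Q => if P ⊆ Q then μ P else 0)]

section Sparse

variable {G} {S : Set (Set Ω)}

lemma measure_sUnion_ssubset_le_half (hSG : S ⊆ G.tree) (hS : IsSparseIn μ S) {P : Set Ω}
    (hP : P ∈ S) : μ (⋃₀ {Q | Q ∈ S ∧ Q ⊂ P}) ≤ μ P / 2 :=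
  calc μ (⋃₀ {Q | Q ∈ S ∧ Q ⊂ P}) ≤ μ (⋃ R ∈ sparseChildren S P, R) := by
        refine measure_mono (Set.sUnion_subset fun Q ⟨hQ, hQP⟩ => ?_)
        obtain ⟨R, hR, hQR⟩ := G.exists_mem_sparseChildren_superset hSG (hSG hP) hQ hQP
        exact hQR.trans (Set.subset_biUnion_of_mem (u := id) hR)
    _ ≤ ∑' R : sparseChildren S P, μ R :=
        measure_biUnion_le μ ((G.countable_tree.mono hSG).mono fun _ hR => hR.1) _
    _ ≤ μ P / 2 := hS P hP

theorem sum_measure_le_two_mul_measure_biUnion (hSG : S ⊆ G.tree) (hS : IsSparseIn μ S)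
    (T : Finset (Set Ω)) (hT : ↑T ⊆ S) : ∑ P ∈ T, μ P ≤ 2 * μ (⋃ P ∈ T, P) := by
  induction T using Finset.strongInduction with
  | H T ih =>
  obtain ⟨M, hMT, hMd, hcover⟩ := G.exists_pairwiseDisjoint_maximals T (hT.trans hSG)
  have hbranch : ∀ t ∈ T, ∑ P ∈ T with P ⊆ t, μ P ≤ 2 * μ t := by
    intro t ht
    have hinsert : T.filter (· ⊆ t) = insert t (T.filter (· ⊂ t)) := by
      ext Q
      simp only [Finset.mem_filter, Finset.mem_insert, subset_iff_ssubset_or_eq]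
      constructor
      · rintro ⟨hQ, hQt | rfl⟩ <;> tauto
      · rintro (rfl | ⟨hQ, hQt⟩) <;> tauto
    have hbelow : ↑(T.filter (· ⊂ t)) ⊆ S := fun Q hQ => hT (Finset.mem_filter.1 hQ).1
    rw [hinsert, Finset.sum_insert (by simp)]
    calc μ t + ∑ P ∈ T with P ⊂ t, μ P
        ≤ μ t + 2 * μ (⋃ P ∈ T.filter (· ⊂ t), P) := by
          gcongr
          exact ih _ (Finset.filter_ssubset.2 ⟨t, ht, ssubset_irrefl t⟩) hbelow
      _ ≤ μ t + 2 * (μ t / 2) := by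
          gcongr
          refine (measure_mono ?_).trans (measure_sUnion_ssubset_le_half hSG hS (hT ht))
          exact Set.iUnion₂_subset fun P hP =>
            Set.subset_sUnion_of_mem ⟨hbelow hP, (Finset.mem_filter.1 hP).2⟩
      _ = 2 * μ t := by rw [ENNReal.mul_div_cancel two_ne_zero ENNReal.ofNat_ne_top, two_mul]
  calc ∑ P ∈ T, μ P ≤ ∑ P ∈ T, ∑ t ∈ M, if P ⊆ t then μ P else 0 := by
        refine Finset.sum_le_sum fun P hP => ?_
        obtain ⟨t, ht, hPt⟩ := hcover P hP
        simpa [hPt] using Finset.single_le_sum (f := fun t => if P ⊆ t then μ P else 0)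
          (fun _ _ => zero_le) ht
    _ = ∑ t ∈ M, ∑ P ∈ T with P ⊆ t, μ P := by
        rw [Finset.sum_comm]
        simp_rw [Finset.sum_filter]
    _ ≤ ∑ t ∈ M, 2 * μ t := Finset.sum_le_sum fun t ht => hbranch t (hMT ht)
    _ = 2 * μ (⋃ t ∈ M, t) := by
        rw [← Finset.mul_sum, measure_biUnion_finset (f := fun t => t) hMd fun t ht =>
          G.measurableSet_of_mem_tree (hSG (hT (hMT ht)))]
    _ ≤ 2 * μ (⋃ P ∈ T, P) := by
        gcongr 2 * μ ?_
        exact Set.iUnion₂_subset fun t ht => Set.subset_biUnion_of_mem (u := id) (hMT ht)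

lemma sum_measure_subset_le_two_mul (hSG : S ⊆ G.tree) (hS : IsSparseIn μ S)
    (T : Finset (Set Ω)) (hT : ↑T ⊆ S) (P : Set Ω) : ∑ Q ∈ T with Q ⊆ P, μ Q ≤ 2 * μ P := by
  refine (sum_measure_le_two_mul_measure_biUnion hSG hS _
    fun Q hQ => hT (Finset.mem_filter.1 hQ).1).trans ?_
  gcongr 2 * μ ?_
  exact Set.iUnion₂_subset fun Q hQ => (Finset.mem_filter.1 hQ).2

theorem lintegral_sum_indicator_one_sq_le (hSG : S ⊆ G.tree) (hS : IsSparseIn μ S)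
    (T : Finset (Set Ω)) (hT : ↑T ⊆ S) :
    ∫⁻ x, (∑ P ∈ T, P.indicator (1 : Ω → ℝ≥0∞) x) ^ 2 ∂μ ≤ 8 * μ (⋃ P ∈ T, P) :=
  calc ∫⁻ x, (∑ P ∈ T, P.indicator (1 : Ω → ℝ≥0∞) x) ^ 2 ∂μ
      = ∑ P ∈ T, ∑ Q ∈ T, μ (P ∩ Q) :=
        lintegral_sum_indicator_one_sq T fun P hP => G.measurableSet_of_mem_tree (hSG (hT hP))
    _ ≤ 2 * ∑ P ∈ T, ∑ Q ∈ T with Q ⊆ P, μ Q := G.sum_sum_measure_inter_le T (hT.trans hSG)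
    _ ≤ 2 * ∑ P ∈ T, 2 * μ P := by
        gcongr with P
        exact sum_measure_subset_le_two_mul hSG hS T hT P
    _ ≤ 2 * (2 * (2 * μ (⋃ P ∈ T, P))) := by
        rw [← Finset.mul_sum]
        gcongr
        exact sum_measure_le_two_mul_measure_biUnion hSG hS T hT
    _ = 8 * μ (⋃ P ∈ T, P) := by ring

theorem sq_mul_measure_lt_sum_indicator_le (hSG : S ⊆ G.tree) (hS : IsSparseIn μ S)
    (T : Finset (Set Ω)) (hT : ↑T ⊆ S) (a : Set Ω → ℝ≥0∞) {β : ℝ≥0∞}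
    (ha : ∀ P ∈ T, a P ≤ β) (ε : ℝ≥0∞) :
    ε ^ 2 * μ {x | ε < ∑ P ∈ T, P.indicator (fun _ => a P) x} ≤
      8 * β ^ 2 * μ (⋃ P ∈ T, P) := by
  set N : Ω → ℝ≥0∞ := fun x => ∑ P ∈ T, P.indicator 1 x
  have hN : Measurable N := Finset.measurable_sum _ fun P hP =>
    measurable_one.indicator (G.measurableSet_of_mem_tree (hSG (hT hP)))
  have hle : ∀ x, ∑ P ∈ T, P.indicator (fun _ => a P) x ≤ β * N x := fun x => by
    rw [Finset.mul_sum]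
    refine Finset.sum_le_sum fun P hP => ?_
    by_cases hx : x ∈ P <;> simp [hx, ha P hP]
  calc ε ^ 2 * μ {x | ε < ∑ P ∈ T, P.indicator (fun _ => a P) x}
      ≤ ε ^ 2 * μ {x | ε ^ 2 ≤ (β * N x) ^ 2} := by
        gcongr ε ^ 2 * μ ?_
        exact fun x (hx : ε < _) => pow_le_pow_left₀ zero_le (hx.le.trans (hle x)) 2
    _ ≤ ∫⁻ x, (β * N x) ^ 2 ∂μ :=
        mul_meas_ge_le_lintegral₀ ((hN.const_mul β).pow_const 2).aemeasurable _
    _ = β ^ 2 * ∫⁻ x, N x ^ 2 ∂μ := by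
        simp_rw [mul_pow]
        exact lintegral_const_mul _ (hN.pow_const 2)
    _ ≤ β ^ 2 * (8 * μ (⋃ P ∈ T, P)) := by
        gcongr
        exact lintegral_sum_indicator_one_sq_le hSG hS T hT
    _ = 8 * β ^ 2 * μ (⋃ P ∈ T, P) := by ring

theorem mul_measure_lt_sum_indicator_le_of_level (hSG : S ⊆ G.tree) (hS : IsSparseIn μ S)
    (T : Finset (Set Ω)) (hT : ↑T ⊆ S) (g : Ω → ℝ≥0∞) {L : ℝ≥0∞} (hL0 : L ≠ 0) (hL : L ≠ ∞)
    (m : ℕ) (hlow : ∀ P ∈ T, L * 2⁻¹ * (2⁻¹ ^ 3) ^ (m + 1) ≤ ⨍⁻ y in P, g y ∂μ)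
    (hup : ∀ P ∈ T, ⨍⁻ y in P, g y ∂μ ≤ L * 2⁻¹ * (2⁻¹ ^ 3) ^ m) :
    L * μ {x | L * 2⁻¹ ^ (m + 1) < ∑ P ∈ T, P.indicator (fun _ => ⨍⁻ y in P, g y ∂μ) x} ≤
      2 ^ 7 * 2⁻¹ ^ m * ∫⁻ x, g x ∂μ := by
  set q : ℝ≥0∞ := 2⁻¹
  have hq : 2 * q = 1 := ENNReal.mul_inv_cancel two_ne_zero ENNReal.ofNat_ne_top
  set β := L * q * (q ^ 3) ^ m
  set γ := L * q * (q ^ 3) ^ (m + 1)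
  set E := {x | L * q ^ (m + 1) < ∑ P ∈ T, P.indicator (fun _ => ⨍⁻ y in P, g y ∂μ) x}
  have hE := sq_mul_measure_lt_sum_indicator_le hSG hS T hT _ hup (L * q ^ (m + 1))
  have hU := G.mul_measure_biUnion_le_lintegral T (hT.trans hSG) g hlow
  set c := L ^ 2 * q ^ (5 * m + 6)
  have hc0 : c ≠ 0 :=
    mul_ne_zero (pow_ne_zero _ hL0) (pow_ne_zero _ (ENNReal.inv_ne_zero.2 ENNReal.ofNat_ne_top))
  have hct : c ≠ ∞ :=
    ENNReal.mul_ne_top (ENNReal.pow_ne_top hL)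
      (ENNReal.pow_ne_top (ENNReal.inv_ne_top.2 two_ne_zero))
  refine (ENNReal.mul_le_mul_iff_right hc0 hct).1 ?_
  calc c * (L * μ E) = (L * q ^ (m + 1)) ^ 2 * μ E * γ := by ring
    _ ≤ 8 * β ^ 2 * μ (⋃ P ∈ T, P) * γ := by gcongr
    _ = 8 * β ^ 2 * (γ * μ (⋃ P ∈ T, P)) := by ring
    _ ≤ 8 * β ^ 2 * ∫⁻ x, g x ∂μ := by gcongr
    _ = 8 * β ^ 2 * (∫⁻ x, g x ∂μ) * (2 * q) ^ 4 := by rw [hq, one_pow, mul_one]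
    _ = c * (2 ^ 7 * q ^ m * ∫⁻ x, g x ∂μ) := by ring

theorem mul_measure_lt_sum_indicator_setLAverage_le (hSG : S ⊆ G.tree) (hS : IsSparseIn μ S)
    (T : Finset (Set Ω)) (hT : ↑T ⊆ S) (g : Ω → ℝ≥0∞) {L : ℝ≥0∞} (hL0 : L ≠ 0) (hL : L ≠ ∞) :
    L * μ {x | L < ∑ P ∈ T, P.indicator (fun _ => ⨍⁻ y in P, g y ∂μ) x} ≤
      258 * ∫⁻ x, g x ∂μ := by
  set a : Set Ω → ℝ≥0∞ := fun P => ⨍⁻ y in P, g y ∂μ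
  set I := ∫⁻ x, g x ∂μ
  set q : ℝ≥0∞ := 2⁻¹
  have hq : 2 * q = 1 := ENNReal.mul_inv_cancel two_ne_zero ENNReal.ofNat_ne_top
  set F : Finset (Set Ω) → Ω → ℝ≥0∞ := fun T' x => ∑ P ∈ T', P.indicator (fun _ => a P) x
  set Big := T.filter fun P => L * q < a P
  set Lev : ℕ → Finset (Set Ω) := fun m =>
    T.filter fun P => L * q * (q ^ 3) ^ (m + 1) < a P ∧ a P ≤ L * q * (q ^ 3) ^ m
  have hcover : {x | L < F T x} ⊆
      (⋃ P ∈ Big, P) ∪ ⋃ m : ℕ, {x | L * q ^ (m + 1) < F (Lev m) x} := by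
    intro x (hx : L < F T x)
    by_contra hx'
    simp only [Set.mem_union, Set.mem_iUnion, not_or, not_exists, Set.mem_ofPred_eq,
      not_lt] at hx'
    obtain ⟨hxBig, hxLev⟩ := hx'
    refine hx.not_ge ((sum_indicator_le_tsum_levels T a
      (ENNReal.mul_ne_top hL (ENNReal.inv_ne_top.2 two_ne_zero))
      (pow_lt_one₀ zero_le (ENNReal.inv_lt_one.2 ENNReal.one_lt_two) three_ne_zero)
      fun P hP hxP => not_lt.1 fun h => hxBig P (Finset.mem_filter.2 ⟨hP, h⟩) hxP).trans ?_)
    calc ∑' m, F (Lev m) x ≤ ∑' m : ℕ, L * q * q ^ m := ENNReal.tsum_le_tsum fun m => by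
          simpa [pow_succ', mul_assoc] using hxLev m
      _ = L := by
          rw [ENNReal.tsum_mul_left, ENNReal.tsum_geometric, ENNReal.one_sub_inv_two, inv_inv,
            mul_assoc, mul_comm q, hq, mul_one]
  have hBig : L * μ (⋃ P ∈ Big, P) ≤ 2 * I := by
    have := G.mul_measure_biUnion_le_lintegral Big (fun P hP => hSG (hT (Finset.mem_filter.1 hP).1))
      g fun P hP => (Finset.mem_filter.1 hP).2.le
    calc L * μ (⋃ P ∈ Big, P) = L * μ (⋃ P ∈ Big, P) * (2 * q) := by rw [hq, mul_one]
      _ = 2 * (L * q * μ (⋃ P ∈ Big, P)) := by ring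
      _ ≤ 2 * I := by gcongr
  have hLev : ∀ m : ℕ, L * μ {x | L * q ^ (m + 1) < F (Lev m) x} ≤ 2 ^ 7 * q ^ m * I :=
    fun m => mul_measure_lt_sum_indicator_le_of_level hSG hS (Lev m)
      (fun P hP => hT (Finset.mem_filter.1 hP).1) g hL0 hL m
      (fun P hP => (Finset.mem_filter.1 hP).2.1.le) fun P hP => (Finset.mem_filter.1 hP).2.2
  calc L * μ {x | L < F T x}
      ≤ L * (μ (⋃ P ∈ Big, P) + ∑' m : ℕ, μ {x | L * q ^ (m + 1) < F (Lev m) x}) := by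
        gcongr
        exact (measure_mono hcover).trans
          ((measure_union_le _ _).trans (add_le_add_right (measure_iUnion_le _) _))
    _ = L * μ (⋃ P ∈ Big, P) + ∑' m : ℕ, L * μ {x | L * q ^ (m + 1) < F (Lev m) x} := by
        rw [mul_add, ENNReal.tsum_mul_left]
    _ ≤ 2 * I + ∑' m : ℕ, 2 ^ 7 * q ^ m * I := add_le_add hBig (ENNReal.tsum_le_tsum hLev)
    _ = 258 * I := by
        rw [ENNReal.tsum_mul_right, ENNReal.tsum_mul_left, ENNReal.tsum_geometric,
          ENNReal.one_sub_inv_two, inv_inv]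
        ring

end Sparse

end MartingaleGrid

/-- Sparse operators on a filtered measure space satisfy the weak (1,1) bound
with an absolute constant. -/
theorem sparseOp_weak11 :
    ∃ C : ENNReal, 0 < C ∧ C ≠ ⊤ ∧
      ∀ (Ω : Type) (_ : MeasurableSpace Ω) (μ : Measure Ω), SigmaFinite μ →
        ∀ (G : MartingaleGrid Ω μ) (S : Set (Set Ω)), S ⊆ G.tree → IsSparseIn μ S →
          ∀ f : Ω → ℝ, Integrable f μ → 0 ≤ f →
            ∀ lam : ℝ, 0 < lam →
              ENNReal.ofReal lam *
                  μ {x | ENNReal.ofReal lam <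
                      ∑' P : S, Set.indicator (P : Set Ω)
                        (fun _ => ENNReal.ofReal (⨍ y in (P : Set Ω), f y ∂μ)) x}
                ≤ C * ∫⁻ x, ENNReal.ofReal (f x) ∂μ := by
  refine ⟨258, by norm_num, by norm_num, ?_⟩
  intro Ω _ μ _ G S hSG hS f hf hf0 lam hlam
  have : Countable S := (G.countable_tree.mono hSG).to_subtype
  have havg : ∀ P : Set Ω, ENNReal.ofReal (⨍ y in P, f y ∂μ) = ⨍⁻ y in P, ENNReal.ofReal (f y) ∂μ :=
    fun P => (ofReal_setAverage hf.integrableOn (ae_of_all _ hf0)).trans (setLAverage_eq _ _ P).symm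
  simp_rw [havg]
  rw [measure_lt_tsum_eq_iSup, ENNReal.mul_iSup]
  refine iSup_le fun T => ?_
  have := MartingaleGrid.mul_measure_lt_sum_indicator_setLAverage_le hSG hS
    (T.map (Function.Embedding.subtype _)) (by simp) (fun x => ENNReal.ofReal (f x))
    (ENNReal.ofReal_pos.2 hlam).ne' ENNReal.ofReal_ne_top
  simpa [Finset.sum_map] using this
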